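/- Let X be a Hausdorff topological space, V a locally convex topological vector space, and f : X → V a continuous map that has local convexity data. If f is open onto its image, then f(X) is a locally convex subset of V. -/

import Mathlib

/-- A set `C ⊆ V` is a cone with vertex `v₀`. -/
def IsConeWithVertex {V : Type*} [AddCommGroup V] [Module ℝ V]
    (C : Set V) (v₀ : V) : Prop :=
  v₀ ∈ C ∧ ∀ v ∈ C, v ≠ v₀ → ∀ l : ℝ, 0 ≤ l → (1 - l) • v₀ + l • v ∈ C

/-- `f` has local convexity data: for each `x` and every sufficiently small open
neighborhood `U` of `x` there is a convex cone `C` with vertex `f x` such that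
(VN) `f(U) ⊆ C` is a neighborhood of `f x` in `C` (subspace topology), and
(SLO) `f|_U : U → C` is an open map and for every smaller neighborhood `U'` of
`x` the set `f(U')` is a neighborhood of `f x` in `C`. -/
def HasLocalConvexityData {X V : Type*} [TopologicalSpace X] [TopologicalSpace V]
    [AddCommGroup V] [Module ℝ V] (f : X → V) : Prop :=
  ∀ x : X, ∀ W ∈ nhds x, ∃ U ∈ nhds x, U ⊆ W ∧ IsOpen U ∧ ∃ C : Set V,
    Convex ℝ C ∧ IsConeWithVertex C (f x) ∧
    -- (VN)
    f '' U ⊆ C ∧ (∃ N ∈ nhds (f x), C ∩ N ⊆ f '' U) ∧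
    -- (SLO): openness of `f|_U` into `C` ...
    (∀ O : Set X, IsOpen O → O ⊆ U → ∀ y ∈ O, ∃ N ∈ nhds (f y), C ∩ N ⊆ f '' O) ∧
    -- ... and `f(U')` is a neighborhood of the vertex for every smaller `U'`
    (∀ U' ∈ nhds x, U' ⊆ U → ∃ N ∈ nhds (f x), C ∩ N ⊆ f '' U')

/-- `f` is open onto its image `f(X)` (with the subspace topology). -/
def OpenOntoImage {X V : Type*} [TopologicalSpace X] [TopologicalSpace V]
    (f : X → V) : Prop :=
  ∀ O : Set X, IsOpen O → ∃ W : Set V, IsOpen W ∧ f '' O = W ∩ Set.range f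

/-- A subset `S` of a topological vector space is locally convex if every point
of `S` has a neighborhood in `V` whose intersection with `S` is convex. -/
def IsLocallyConvexSet {V : Type*} [TopologicalSpace V] [AddCommGroup V]
    [Module ℝ V] (S : Set V) : Prop :=
  ∀ v ∈ S, ∃ N ∈ nhds v, Convex ℝ (N ∩ S)

/-!
Near `f x`, the image `f(X)` coincides with a convex cone: openness onto the image makes
`f(U)` a neighbourhood of `f x` in `f(X)`, while (VN) says `f(U) ⊆ C` is a neighbourhood of
`f x` in `C`. A set that agrees near `v` with a convex set is convex on every small convex
neighbourhood of `v`, and such neighbourhoods exist in a locally convex space.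
-/

open Filter Topology

theorem exists_mem_nhds_convex_inter_of_eventuallyEq {𝕜 V : Type*} [Semiring 𝕜]
    [PartialOrder 𝕜] [AddCommMonoid V] [Module 𝕜 V] [TopologicalSpace V]
    [LocallyConvexSpace 𝕜 V] {S C : Set V} {v : V} (hC : Convex 𝕜 C) (h : S =ᶠ[𝓝 v] C) :
    ∃ N ∈ 𝓝 v, Convex 𝕜 (N ∩ S) := by
  obtain ⟨M, ⟨hM, hMconv⟩, hMsub⟩ := (LocallyConvexSpace.convex_basis (𝕜 := 𝕜) v).mem_iff.mp
    h.mem_iff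
  have hMS : M ∩ S = M ∩ C := Set.ext fun _ => and_congr_right fun hy => hMsub hy
  exact ⟨M, hM, hMS ▸ hMconv.inter hC⟩

theorem HasLocalConvexityData.range_eventuallyEq_convex {X V : Type*} [TopologicalSpace X]
    [TopologicalSpace V] [AddCommGroup V] [Module ℝ V] {f : X → V}
    (hlcd : HasLocalConvexityData f) (hopen : OpenOntoImage f) (x : X) :
    ∃ C : Set V, Convex ℝ C ∧ Set.range f =ᶠ[𝓝 (f x)] C := by
  obtain ⟨U, hUx, -, hUopen, C, hC, -, hfUC, ⟨N, hN, hCN⟩, -, -⟩ :=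
    hlcd x Set.univ univ_mem
  obtain ⟨W, hWopen, hfU⟩ := hopen U hUopen
  have hxW : f x ∈ W := (hfU ▸ Set.mem_image_of_mem f (mem_of_mem_nhds hUx)).1
  refine ⟨C, hC, eventuallyEq_set.mpr ?_⟩
  filter_upwards [hN, hWopen.mem_nhds hxW] with y hyN hyW
  exact ⟨fun hy => hfUC (hfU ▸ ⟨hyW, hy⟩),
    fun hy => Set.image_subset_range f U (hCN ⟨hy, hyN⟩)⟩

theorem stmt_6_general {X V : Type*} [TopologicalSpace X]
    [TopologicalSpace V] [AddCommGroup V] [Module ℝ V]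
    [LocallyConvexSpace ℝ V]
    {f : X → V} (hlcd : HasLocalConvexityData f)
    (hopen : OpenOntoImage f) :
    IsLocallyConvexSet (Set.range f) := by
  rintro v ⟨x, rfl⟩
  obtain ⟨C, hC, hfC⟩ := hlcd.range_eventuallyEq_convex hopen x
  exact exists_mem_nhds_convex_inter_of_eventuallyEq hC hfC

/-- Let `X` be a Hausdorff space, `V` a locally convex topological vector space,
and `f : X → V` continuous with local convexity data. If `f` is open onto its
image then `f(X)` is a locally convex subset of `V`. -/
theorem stmt_6 {X V : Type*} [TopologicalSpace X] [T2Space X]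
    [TopologicalSpace V] [AddCommGroup V] [Module ℝ V]
    [IsTopologicalAddGroup V] [ContinuousSMul ℝ V] [LocallyConvexSpace ℝ V]
    {f : X → V} (hf : Continuous f) (hlcd : HasLocalConvexityData f)
    (hopen : OpenOntoImage f) :
    IsLocallyConvexSet (Set.range f) :=
  stmt_6_general hlcd hopen
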